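/- arXiv:2601.14635 — 8 statements merged into one kernel-verified Lean document; each statement's English description precedes it below -/
import Mathlib

section
/- There are no odd integers m, n with 1 < m < n, gcd(m,n) = 1, and primes p, q with 5 ≤ p < q, such that pq divides 4mn and (m-1)(n-1) = pq + 1. -/
theorem stmt_0 :
    ¬ ∃ (m n p q : ℕ), Odd m ∧ Odd n ∧ 1 < m ∧ m < n ∧ Nat.gcd m n = 1 ∧
      p.Prime ∧ q.Prime ∧ 5 ≤ p ∧ p < q ∧
      p * q ∣ 4 * m * n ∧ (m - 1) * (n - 1) = p * q + 1 := by
  rintro ⟨m, n, p, q, hm, hn, h1m, hmn, hg, hp, hq, h5p, hpqlt, hdvd, heq⟩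
  have hm3 : 3 ≤ m := by
    rcases hm with ⟨k, hk⟩; omega
  -- rewrite equation without subtraction: m*n = p*q + m + n
  have hkey : m * n = p * q + m + n := by
    obtain ⟨a, rfl⟩ : ∃ a, m = a + 1 := ⟨m - 1, by omega⟩
    obtain ⟨b, rfl⟩ : ∃ b, n = b + 1 := ⟨n - 1, by omega⟩
    simp only [Nat.add_sub_cancel] at heq
    have hexp : (a + 1) * (b + 1) = a * b + a + b + 1 := by ring
    linarith
  -- p*q coprime to any k with 0 < k ≤ 4
  have hcop : ∀ k, 0 < k → k ≤ 4 → Nat.Coprime (p * q) k := by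
    intro k hk0 hk4
    refine Nat.Coprime.mul ?_ ?_
    · exact (hp.coprime_iff_not_dvd).mpr fun h => by have := Nat.le_of_dvd hk0 h; omega
    · exact (hq.coprime_iff_not_dvd).mpr fun h => by have := Nat.le_of_dvd hk0 h; omega
  -- p*q divides m*n
  have hdvd' : p * q ∣ m * n := by
    have h4 : p * q ∣ 4 * (m * n) := by rwa [← mul_assoc]
    exact (Nat.Coprime.dvd_of_dvd_mul_left (hcop 4 (by norm_num) le_rfl) h4)
  -- hence p*q divides m+n
  have hdvds : p * q ∣ m + n := by
    have : m + n = m * n - p * q := by omega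
    rw [this]
    exact Nat.dvd_sub hdvd' dvd_rfl
  have hle : p * q ≤ m + n := Nat.le_of_dvd (by omega) hdvds
  -- so m*n ≤ 2(m+n), forcing m = 3
  have hmeq : m = 3 := by
    by_contra h
    have hm5 : 5 ≤ m := by rcases hm with ⟨k, hk⟩; omega
    nlinarith
  subst hmeq
  -- now p*q = 2n - 3, and p*q ∣ 3n with coprimality to 3 gives p*q ∣ n
  have hpq3 : p * q + 3 = 2 * n := by omega
  have hdn : p * q ∣ n :=
    Nat.Coprime.dvd_of_dvd_mul_left (hcop 3 (by norm_num) (by norm_num)) hdvd'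
  have := Nat.le_of_dvd (by omega) hdn
  omega
end

section
/- Let p and q be primes with 5 ≤ p < q, and suppose β and γ are positive integers with β ≥ γ such that α := pβγ / ((q-2)βγ + 2(βγ - β - γ)) is a positive integer. Then either γ = 1 or β = γ = 2. -/
theorem stmt_2 (p q : ℕ) (hp : p.Prime) (hq : q.Prime) (h5 : 5 ≤ p) (hpq : p < q)
    (α β γ : ℤ) (hα : 0 < α) (hβ : 0 < β) (hγ : 0 < γ) (hβγ : γ ≤ β)
    (heq : α * (((q : ℤ) - 2) * β * γ + 2 * (β * γ - β - γ)) = (p : ℤ) * β * γ) :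
    γ = 1 ∨ (β = 2 ∧ γ = 2) := by
  by_cases hγ1 : γ = 1
  · exact Or.inl hγ1
  right
  have hγ2 : 2 ≤ γ := by omega
  have hβ2 : 2 ≤ β := le_trans hγ2 hβγ
  -- q ≥ p + 2 since both are odd primes
  have hpodd : p % 2 = 1 := Nat.odd_iff.mp (hp.odd_of_ne_two (by omega))
  have hqodd : q % 2 = 1 := Nat.odd_iff.mp (hq.odd_of_ne_two (by omega))
  have hq2' : (p : ℤ) + 2 ≤ q := by
    have : p + 2 ≤ q := by omega
    exact_mod_cast this
  -- rewrite the equation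
  have heq' : α * ((q : ℤ) * β * γ - 2 * β - 2 * γ) = (p : ℤ) * β * γ := by ring_nf; linarith [heq]
  have hp0 : (0:ℤ) < p := by positivity
  have hrhs : (0:ℤ) < (p : ℤ) * β * γ := by positivity
  have hD : (0:ℤ) < (q : ℤ) * β * γ - 2 * β - 2 * γ := by
    rcases lt_trichotomy ((q : ℤ) * β * γ - 2 * β - 2 * γ) 0 with h | h | h
    · nlinarith
    · rw [h] at heq'; simp at heq'
      rcases heq' with (h1 | h1) | h1
      · omega
      · linarith
      · linarith
    · exact h
  have hα1 : 1 ≤ α := hα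
  have key : (β - 1) * (γ - 1) ≤ 1 := by nlinarith [mul_le_mul_of_nonneg_right hq2' (le_of_lt (mul_pos hβ hγ))]
  constructor <;> nlinarith
end

section
/- Let p, q be primes with 5 ≤ p < q and let β be a positive integer such that α := pβ/((q-2)β - 2) is a positive integer. Then α = 1. -/
theorem stmt_3 (p q : ℕ) (hp : p.Prime) (hq : q.Prime) (h5 : 5 ≤ p) (hpq : p < q)
    (α β : ℤ) (hα : 0 < α) (hβ : 0 < β)
    (heq : α * (((q : ℤ) - 2) * β - 2) = (p : ℤ) * β) :
    α = 1 := by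
  have hpodd := hp.odd_of_ne_two (by omega)
  have hqodd := hq.odd_of_ne_two (by omega)
  have hq2 : (p : ℤ) + 2 ≤ q := by
    rcases hpodd with ⟨a, ha⟩
    rcases hqodd with ⟨b, hb⟩
    have : p + 2 ≤ q := by omega
    exact_mod_cast this
  have hp5 : (5 : ℤ) ≤ p := by exact_mod_cast h5
  have hpβ : (5 : ℤ) ≤ (p : ℤ) * β := by nlinarith
  have hX : 0 < ((q : ℤ) - 2) * β - 2 := by
    by_contra h
    push_neg at h
    nlinarith [mul_nonpos_of_nonneg_of_nonpos hα.le h]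
  have h1 : α ≤ 1 := by
    by_contra h
    push_neg at h
    have h2 : 2 ≤ α := h
    nlinarith [mul_le_mul_of_nonneg_right hq2 hβ.le]
  omega
end

section
/- Let p, q be primes with 5 ≤ p < q, and let α, β be positive integers satisfying β(αq - 2p) = 4α (equivalently α = pβ·4/(qβ·4 - 2qβ - 2·4), arising from type (βq, 4)). If α ≥ 2, then α = 2 and β ∈ {1, 2}; moreover either (β = 1 and q - p = 4) or (β = 2 and q - p = 2). -/
theorem stmt_4 (p q : ℕ) (hp : p.Prime) (hq : q.Prime) (h5 : 5 ≤ p) (hpq : p < q)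
    (α β : ℤ) (hα : 0 < α) (hβ : 0 < β)
    (heq : β * (α * (q : ℤ) - 2 * (p : ℤ)) = 4 * α) (h2 : 2 ≤ α) :
    α = 2 ∧ ((β = 1 ∧ (q : ℤ) - (p : ℤ) = 4) ∨ (β = 2 ∧ (q : ℤ) - (p : ℤ) = 2)) := by
  have hpo : p % 2 = 1 := by
    rcases hp.eq_two_or_odd with h | h
    · omega
    · exact h
  have hqo : q % 2 = 1 := by
    rcases hq.eq_two_or_odd with h | h
    · omega
    · exact h
  have hq7 : 7 ≤ q := by omega
  have hp5 : (5:ℤ) ≤ (p:ℤ) := by exact_mod_cast h5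
  have hq7' : (7:ℤ) ≤ (q:ℤ) := by exact_mod_cast hq7
  have hpq' : (p:ℤ) + 2 ≤ (q:ℤ) := by omega
  have hpo' : (p:ℤ) % 2 = 1 := by omega
  have hqo' : (q:ℤ) % 2 = 1 := by omega
  have hdpos : (0:ℤ) ≤ α * q - 2 * p := by nlinarith
  have hαle : α ≤ 4 := by
    nlinarith [mul_nonneg (by linarith : (0:ℤ) ≤ α - 2) (by linarith : (0:ℤ) ≤ (q:ℤ) - 7),
      mul_nonneg (by linarith : (0:ℤ) ≤ β - 1) hdpos]
  interval_cases α
  · -- α = 2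
    have h8 : 2 * (β * ((q:ℤ) - p)) = 8 := by linear_combination heq
    have h4 : β * ((q:ℤ) - p) = 4 := by linarith
    set t : ℤ := (q:ℤ) - p with ht
    have ht2 : 2 ≤ t := by omega
    have ht4 : t ≤ 4 := by nlinarith [mul_nonneg (by linarith : (0:ℤ) ≤ β - 1) (by omega : (0:ℤ) ≤ t)]
    have htpar : t % 2 = 0 := by omega
    interval_cases t
    · exact ⟨rfl, Or.inr ⟨by omega, rfl⟩⟩
    · omega
    · exact ⟨rfl, Or.inl ⟨by omega, rfl⟩⟩
  · -- α = 3
    exfalso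
    set d : ℤ := 3 * (q:ℤ) - 2 * p with hd
    have hd9 : 9 ≤ d := by omega
    have hd12 : d ≤ 12 := by nlinarith [mul_nonneg (by linarith : (0:ℤ) ≤ β - 1) (by omega : (0:ℤ) ≤ d)]
    have heq' : β * d = 12 := by linear_combination heq
    have hdpar : d % 2 = 1 := by omega
    interval_cases d <;> omega
  · -- α = 4
    exfalso
    set d : ℤ := 4 * (q:ℤ) - 2 * p with hd
    have hd16 : 16 ≤ d := by omega
    have hd16' : d ≤ 16 := by nlinarith [mul_nonneg (by linarith : (0:ℤ) ≤ β - 1) (by omega : (0:ℤ) ≤ d)]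
    have heq' : β * d = 16 := by linear_combination heq
    omega
end

section
/- Let p, q be primes with 5 ≤ p < q, let y ≥ 5 and β ≥ 1 be integers, and suppose α := pβy/(qβy - 2qβ - 2y) is a positive integer. Then α ≤ 3. -/
theorem stmt_5 (p q : ℕ) (hp : p.Prime) (hq : q.Prime) (h5 : 5 ≤ p) (hpq : p < q)
    (y β α : ℤ) (hy : 5 ≤ y) (hβ : 1 ≤ β) (hα : 0 < α)
    (heq : α * ((q : ℤ) * β * y - 2 * (q : ℤ) * β - 2 * y) = (p : ℤ) * β * y) :
    α ≤ 3 := by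
  by_contra h
  push_neg at h
  have h4 : (4:ℤ) ≤ α := by omega
  have hp5 : (5:ℤ) ≤ (p:ℤ) := by exact_mod_cast h5
  have hq6 : (6:ℤ) ≤ (q:ℤ) := by
    have : p + 1 ≤ q := hpq
    have : (6:ℕ) ≤ q := by omega
    exact_mod_cast this
  have hrhs : (0:ℤ) < (p:ℤ) * β * y := by positivity
  have hD : (0:ℤ) < (q : ℤ) * β * y - 2 * (q : ℤ) * β - 2 * y := by
    by_contra hD
    push_neg at hD
    nlinarith
  have h4D : 4 * ((q : ℤ) * β * y - 2 * (q : ℤ) * β - 2 * y) ≤ (p:ℤ) * β * y := by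
    nlinarith
  have hqp : (p:ℤ) + 1 ≤ (q:ℤ) := by exact_mod_cast hpq
  nlinarith [mul_nonneg (mul_nonneg (by linarith : (0:ℤ) ≤ (q:ℤ) - 6) (by linarith : (0:ℤ) ≤ β)) (by linarith : (0:ℤ) ≤ 3*y - 8),
    mul_nonneg (by linarith : (0:ℤ) ≤ β - 1) (by linarith : (0:ℤ) ≤ 3*y - 8),
    mul_nonneg (mul_nonneg (by linarith : (0:ℤ) ≤ (q:ℤ) - (p:ℤ) - 1) (by linarith : (0:ℤ) ≤ β)) (by linarith : (0:ℤ) ≤ y)]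
end

section
/- For any odd prime f, the general linear group GL(2, 𝔽_f) contains no subgroup isomorphic to PSL(2, d) for any prime power d ≥ 4 with PSL(2,d) simple. -/
/-!
Being simple and nonabelian, `PSL(2, d)` is perfect, so every homomorphism from it to
`GL(2, 𝔽_f)` lands in determinant one. In odd characteristic Cayley–Hamilton shows that a
determinant-one involution of `GL(2)` is scalar, hence central. But the class of `!![0, 1; -1, 0]`
is an involution of `PSL(2, d)` that does not commute with the class of `!![1, 1; 0, 1]`, so no
such homomorphism is injective.
-/

open Matrix

open scoped MatrixGroups

lemma Group.IsPerfect.map_eq_one {G A : Type*} [Group G] [Group.IsPerfect G] [CommGroup A]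
    (φ : G →* A) (g : G) : φ g = 1 :=
  Abelianization.commutator_subset_ker φ Group.IsPerfect.mem_commutator

lemma IsSimpleGroup.isPerfect_of_not_commute {G : Type*} [Group G] [IsSimpleGroup G] {a b : G}
    (hab : ¬ Commute a b) : Group.IsPerfect G := by
  refine ⟨(Subgroup.commutator_normal ⊤ ⊤).eq_bot_or_eq_top.resolve_left fun hbot ↦ hab ?_⟩
  rw [Subgroup.commutator_eq_bot_iff_le_centralizer] at hbot
  exact (hbot (Subgroup.mem_top a) b (Subgroup.mem_top b)).symm

namespace Matrix

lemma mem_range_scalar_of_mul_self_eq_one_of_det_eq_one {F : Type*} [Field F] [NeZero (2 : F)]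
    {M : Matrix (Fin 2) (Fin 2) F} (hM : M * M = 1) (hdet : M.det = 1) :
    M ∈ Set.range (scalar (Fin 2)) := by
  -- Cayley–Hamilton turns `M ^ 2 = 1` and `det M = 1` into `trace M • M = 2`.
  have hCH := M.aeval_self_charpoly
  rw [charpoly_fin_two] at hCH
  simp only [map_sub, map_add, map_mul, Polynomial.aeval_C, Polynomial.aeval_X, sq, hM, hdet,
    map_one, ← Algebra.smul_def] at hCH
  have htr : M.trace • M = (2 : F) • 1 := by
    rw [two_smul, ← sub_eq_zero, ← neg_eq_zero, ← hCH]
    abel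
  have htr0 : M.trace ≠ 0 := by
    intro h
    exact two_ne_zero (by simpa [h] using (congrFun (congrFun htr 0) 0).symm : (2 : F) = 0)
  refine ⟨2 / M.trace, ?_⟩
  rw [scalar_apply, ← smul_one_eq_diagonal, div_eq_inv_mul, mul_smul, ← htr, smul_smul,
    inv_mul_cancel₀ htr0, one_smul]

lemma GeneralLinearGroup.mem_center_of_sq_eq_one_of_det_eq_one {F : Type*} [Field F]
    [NeZero (2 : F)] {g : GL (Fin 2) F} (hg : g ^ 2 = 1) (hdet : g.det = 1) :
    g ∈ Subgroup.center (GL (Fin 2) F) :=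
  GeneralLinearGroup.mem_center_iff_val_mem_range_scalar.mpr <|
    mem_range_scalar_of_mul_self_eq_one_of_det_eq_one
      (by simpa only [sq, Units.ext_iff, Units.val_mul, Units.val_one] using hg)
      (by simpa only [Units.ext_iff, GeneralLinearGroup.val_det_apply, Units.val_one] using hdet)

theorem GeneralLinearGroup.not_injective_of_sq_eq_one_of_not_commute {G F : Type*}
    [Group G] [Group.IsPerfect G] [Field F] [NeZero (2 : F)] (φ : G →* GL (Fin 2) F) {t s : G}
    (ht : t ^ 2 = 1) (hts : ¬ Commute t s) : ¬ Function.Injective φ := by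
  intro hφ
  have hcenter : φ t ∈ Subgroup.center (GL (Fin 2) F) :=
    mem_center_of_sq_eq_one_of_det_eq_one (by rw [← map_pow, ht, map_one])
      (Group.IsPerfect.map_eq_one (GeneralLinearGroup.det.comp φ) t)
  exact hts (Commute.of_map hφ (Subgroup.mem_center_iff.mp hcenter (φ s)).symm)

lemma ProjectiveSpecialLinearGroup.exists_sq_eq_one_not_commute (R : Type*) [CommRing R]
    [Nontrivial R] : ∃ t s : PSL(2, R), t ^ 2 = 1 ∧ ¬ Commute t s := by
  let w : SL(2, R) := ⟨!![0, 1; -1, 0], by simp [det_fin_two_of]⟩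
  let u : SL(2, R) := ⟨!![1, 1; 0, 1], by simp [det_fin_two_of]⟩
  refine ⟨QuotientGroup.mk w, QuotientGroup.mk u, ?_, ?_⟩
  · rw [← QuotientGroup.mk_pow, QuotientGroup.eq_one_iff, SpecialLinearGroup.mem_center_iff]
    refine ⟨-1, by norm_num, ?_⟩
    rw [SpecialLinearGroup.coe_pow]
    ext i j
    fin_cases i <;> fin_cases j <;> simp [w, sq, mul_apply, Fin.sum_univ_two]
  · rw [Commute, SemiconjBy, ← QuotientGroup.mk_mul, ← QuotientGroup.mk_mul, QuotientGroup.eq,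
      SpecialLinearGroup.mem_center_iff]
    rintro ⟨c, -, hc⟩
    have huw : ((u * w : SL(2, R)) : Matrix (Fin 2) (Fin 2) R) =
        (↑(w * u) : Matrix (Fin 2) (Fin 2) R) * scalar (Fin 2) c := by
      rw [hc, ← SpecialLinearGroup.coe_mul, mul_inv_cancel_left]
    rw [SpecialLinearGroup.coe_mul, SpecialLinearGroup.coe_mul] at huw
    -- The `(0, 0)` entries are `-1` on the left and `0` on the right.
    have h00 := congrFun (congrFun huw 0) 0
    simp [w, u, mul_apply, Fin.sum_univ_two] at h00

end Matrix

theorem stmt_10_general (f : ℕ) [Fact f.Prime] (hf : Odd f)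
    (r k : ℕ) [Fact r.Prime]
    (hsimple : IsSimpleGroup
      (Matrix.ProjectiveSpecialLinearGroup (Fin 2) (GaloisField r k))) :
    ¬ ∃ H : Subgroup (Matrix.GeneralLinearGroup (Fin 2) (ZMod f)),
      Nonempty (H ≃* Matrix.ProjectiveSpecialLinearGroup (Fin 2) (GaloisField r k)) := by
  rintro ⟨H, ⟨e⟩⟩
  have : NeZero (2 : ZMod f) := NeZero.of_not_dvd (ZMod f) (p := f) fun h2 ↦ by
    obtain rfl := (Nat.prime_dvd_prime_iff_eq Fact.out Nat.prime_two).mp h2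
    exact absurd hf (by decide)
  obtain ⟨t, s, ht, hts⟩ :=
    ProjectiveSpecialLinearGroup.exists_sq_eq_one_not_commute (GaloisField r k)
  have := hsimple.isPerfect_of_not_commute hts
  exact GeneralLinearGroup.not_injective_of_sq_eq_one_of_not_commute
    (H.subtype.comp e.symm.toMonoidHom) ht hts (H.subtype_injective.comp e.symm.injective)

/-- For any odd prime `f`, `GL(2, 𝔽_f)` contains no subgroup isomorphic to `PSL(2, d)`
for a prime power `d = r ^ k ≥ 4` with `PSL(2, d)` simple. -/
theorem stmt_10 (f : ℕ) [Fact f.Prime] (hf : Odd f)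
    (r k : ℕ) [Fact r.Prime] (hk : 0 < k) (hd : 4 ≤ r ^ k)
    (hsimple : IsSimpleGroup
      (Matrix.ProjectiveSpecialLinearGroup (Fin 2) (GaloisField r k))) :
    ¬ ∃ H : Subgroup (Matrix.GeneralLinearGroup (Fin 2) (ZMod f)),
      Nonempty (H ≃* Matrix.ProjectiveSpecialLinearGroup (Fin 2) (GaloisField r k)) :=
  stmt_10_general f hf r k hsimple
end

section
/- Let G be a finite group and p a prime dividing |Z(G) ∩ G'|. Then a Sylow p-subgroup of G is non-abelian. -/
/-!
The transfer `G →* H` into an abelian subgroup `H` of finite index kills `G'` and sends a central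
element `g` to `g ^ [G : H]`. Hence every element of `Z(G) ∩ G'` has order dividing the index of
every abelian subgroup. An element of order `p` in `Z(G) ∩ G'` (Cauchy) would then force `p` to
divide the index of an abelian Sylow `p`-subgroup, which is impossible.
-/

section

open Subgroup

variable {G : Type*} [Group G]

open scoped IsMulCommutative in
theorem MonoidHom.transfer_id_eq_pow_of_mem_center {H : Subgroup G} [IsMulCommutative H]
    [H.FiniteIndex] {g : G} (hg : g ∈ center G) :
    (transfer (MonoidHom.id H) g : G) = g ^ H.index := by
  rw [MonoidHom.transfer_eq_pow (MonoidHom.id H) g fun k g₀ _ => by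
    rw [mem_center_iff.mp (pow_mem hg k) g₀⁻¹, inv_mul_cancel_right]]
  rfl

open scoped IsMulCommutative in
theorem Subgroup.pow_index_eq_one_of_mem_center_inf_commutator (H : Subgroup G)
    [IsMulCommutative H] {g : G} (hg : g ∈ center G ⊓ _root_.commutator G) :
    g ^ H.index = 1 := by
  obtain hH | hH := eq_or_ne H.index 0
  · rw [hH, pow_zero]
  have : H.FiniteIndex := ⟨hH⟩
  have hker : (MonoidHom.id H).transfer g = 1 :=
    Abelianization.commutator_subset_ker _ (mem_inf.mp hg).2
  rw [← MonoidHom.transfer_id_eq_pow_of_mem_center (mem_inf.mp hg).1, hker, coe_one]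

end

theorem stmt_13 (G : Type*) [Group G] [Finite G] (p : ℕ) (hp : p.Prime)
    (hdvd : p ∣ Nat.card (↥(Subgroup.center G ⊓ commutator G)))
    (P : Sylow p G) :
    ¬ IsMulCommutative ↥(P : Subgroup G) := by
  intro hP
  have : Fact p.Prime := ⟨hp⟩
  obtain ⟨g, hgp⟩ := exists_prime_orderOf_dvd_card' p hdvd
  have hpow := (P : Subgroup G).pow_index_eq_one_of_mem_center_inf_commutator g.2
  have hdvd_index := orderOf_dvd_of_pow_eq_one hpow
  rw [Subgroup.orderOf_coe, hgp] at hdvd_index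
  exact P.not_dvd_index hdvd_index
end

section
/- Let x, y be integers with x ≥ y ≥ 3 such that k(x,y) := xy/(xy - 2x - 2y) is a positive integer. Then (x,y) belongs to the finite list {(7,3),(8,3),(9,3),(12,3),(15,3),(24,3),(5,4),(6,4),(8,4),(12,4),(5,5),(20,5),(6,6),(12,6),(8,8)}. -/
set_option maxHeartbeats 2000000


theorem stmt_17 (x y k : ℤ) (hy : 3 ≤ y) (hxy : y ≤ x) (hk : 0 < k)
    (heq : k * (x * y - 2 * x - 2 * y) = x * y) :
    (x, y) ∈ ({(7, 3), (8, 3), (9, 3), (12, 3), (15, 3), (24, 3),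
      (5, 4), (6, 4), (8, 4), (12, 4), (5, 5), (20, 5),
      (6, 6), (12, 6), (8, 8)} : Set (ℤ × ℤ)) := by
  have hd : 0 < x * y - 2 * x - 2 * y := by
    rcases le_or_gt (x * y - 2 * x - 2 * y) 0 with h | h
    · exfalso
      nlinarith [mul_nonpos_of_nonneg_of_nonpos hk.le h]
    · exact h
  have hk2 : 2 ≤ k := by
    rcases lt_or_ge k 2 with h | h
    · interval_cases k <;> nlinarith
    · exact h
  have h2d : 2 * (x * y - 2 * x - 2 * y) ≤ x * y := by
    nlinarith [mul_nonneg (by linarith : (0:ℤ) ≤ k - 2) hd.le]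
  have hy8 : y ≤ 8 := by nlinarith
  simp only [Set.mem_insert_iff, Set.mem_singleton_iff, Prod.mk.injEq]
  interval_cases y
  · -- y = 3
    have h18 : (k - 3) * (x - 6) = 18 := by linear_combination heq
    have hx : x ≤ 24 := by
      rcases le_or_gt k 3 with h | h
      · nlinarith
      · nlinarith
    interval_cases x <;> omega
  · -- y = 4
    have h16 : 2 * ((k - 2) * (x - 4)) = 16 := by linear_combination heq
    have h8 : (k - 2) * (x - 4) = 8 := by linarith
    have hx : x ≤ 12 := by
      rcases le_or_gt k 2 with h | h
      · nlinarith
      · nlinarith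
    interval_cases x <;> omega
  · -- y = 5
    have hx : x ≤ 20 := by linarith
    interval_cases x <;> omega
  · -- y = 6
    have hx : x ≤ 12 := by linarith
    interval_cases x <;> omega
  · -- y = 7
    have hx : x ≤ 9 := by linarith
    interval_cases x <;> omega
  · -- y = 8
    have hx : x ≤ 8 := by linarith
    interval_cases x <;> omega
end
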